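/- arXiv:1612.00145 — 3 statements merged into one kernel-verified Lean document; each statement's English description precedes it below -/
import Mathlib

section
/- The Rogers dilogarithm L satisfies the five-term (pentagon) identity: for all real x, y with 0 < x < 1, 0 < y < 1, one has L(x) + L(y) = L(x(1-y)/(1-xy)) + L(xy) + L(y(1-x)/(1-xy)). -/
/-!
On `s ∈ [0, x]` consider `G s = L(s(1-y)/(1-sy)) + L(sy) + L(y(1-s)/(1-sy)) - L(s)`.
Since `L'(t) = -(log(1-t)/t + log t/(1-t))/2` and the arguments of `L` in `G`, together with one
minus each of them, factor into `s, y, 1-s, 1-y, 1-sy`, expanding the logarithms shows `G' = 0`.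
As `L` is continuous at `0` with `L 0 = 0`, `G x = G 0 = L y`.
-/

noncomputable def rogersL (x : ℝ) : ℝ :=
  -(1 / 2) * ∫ t in (0 : ℝ)..x, (Real.log (1 - t) / t + Real.log t / (1 - t))

open Real Set Filter Topology MeasureTheory intervalIntegral

noncomputable def rogersIntegrand (t : ℝ) : ℝ := log (1 - t) / t + log t / (1 - t)

theorem rogersL_zero : rogersL 0 = 0 := by simp [rogersL]

theorem continuousAt_rogersIntegrand {t : ℝ} (h0 : t ≠ 0) (h1 : t ≠ 1) :
    ContinuousAt rogersIntegrand t := by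
  have h1' : 1 - t ≠ 0 := sub_ne_zero.2 h1.symm
  unfold rogersIntegrand
  fun_prop (disch := assumption)

theorem intervalIntegrable_rogersIntegrand {a b : ℝ} (ha : a < 1) (hb : b < 1) :
    IntervalIntegrable rogersIntegrand volume a b := by
  have hsub : uIcc a b ⊆ Iio 1 := fun t ht => ht.2.trans_lt (max_lt ha hb)
  have hslope : ContinuousOn (dslope (fun t => log (1 - t)) 0) (Iio 1) := by
    refine (continuousOn_dslope (Iio_mem_nhds one_pos)).2 ⟨?_, ?_⟩
    · exact fun t ht => ((continuousAt_log (sub_pos.2 ht).ne').comp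
        (by fun_prop)).continuousWithinAt
    · exact DifferentiableAt.log (by fun_prop) (by norm_num)
  -- off `0`, `log (1 - t) / t` is the difference quotient of `log (1 - ·)` at `0`
  have hdecomp : (fun t => dslope (fun t => log (1 - t)) 0 t + log t * (1 - t)⁻¹)
      =ᵐ[volume] rogersIntegrand := by
    filter_upwards [compl_mem_ae_iff.2 (measure_singleton (0 : ℝ))] with t ht
    rw [dslope_of_ne _ ht, slope_def_field]
    simp [rogersIntegrand, div_eq_mul_inv]
  refine IntervalIntegrable.congr_ae ?_ (ae_restrict_of_ae hdecomp)
  exact (hslope.mono hsub).intervalIntegrable.add (intervalIntegrable_log'.mul_continuousOn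
    (fun t ht => ((continuousAt_const.sub continuousAt_id).inv₀
      (sub_pos.2 (hsub ht)).ne').continuousWithinAt))

theorem continuousAt_rogersL {x : ℝ} (hx : x < 1) : ContinuousAt rogersL x := by
  have hlo : min x 0 - 1 < x := by linarith [min_le_left x 0]
  have hhi : x < (max x 0 + 1) / 2 := by linarith [le_max_left x 0, max_lt hx one_pos]
  have hprim := continuousOn_primitive_interval' (a := 0)
    (intervalIntegrable_rogersIntegrand (b := (max x 0 + 1) / 2) (hlo.trans hx)
      (by linarith [max_lt hx one_pos]))
    (mem_uIcc_of_le (by linarith [min_le_right x 0]) (by linarith [le_max_right x 0]))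
  rw [uIcc_of_le (hlo.trans hhi).le] at hprim
  exact (hprim.continuousAt (Icc_mem_nhds hlo hhi)).const_mul _

theorem hasDerivAt_rogersL {x : ℝ} (h0 : x ≠ 0) (h1 : x < 1) :
    HasDerivAt rogersL (-(1 / 2) * rogersIntegrand x) x := by
  have hmeas : Measurable rogersIntegrand := by unfold rogersIntegrand; fun_prop
  exact (integral_hasDerivAt_right (intervalIntegrable_rogersIntegrand one_pos h1)
    hmeas.stronglyMeasurable.stronglyMeasurableAtFilter
    (continuousAt_rogersIntegrand h0 h1.ne)).const_mul _

theorem rogersIntegrand_pentagon {s y : ℝ} (hs0 : 0 < s) (hs1 : s < 1) (hy0 : 0 < y)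
    (hy1 : y < 1) :
    rogersIntegrand (s * (1 - y) / (1 - s * y)) * ((1 - y) / (1 - s * y) ^ 2)
      + rogersIntegrand (s * y) * y
      + rogersIntegrand (y * (1 - s) / (1 - s * y)) * (-(y * (1 - y)) / (1 - s * y) ^ 2)
      = rogersIntegrand s := by
  have hsy : 0 < 1 - s * y := by nlinarith
  have h1s : 0 < 1 - s := by linarith
  have h1y : 0 < 1 - y := by linarith
  have e1 : 1 - s * (1 - y) / (1 - s * y) = (1 - s) / (1 - s * y) := by
    rw [eq_div_iff hsy.ne', sub_mul, div_mul_cancel₀ _ hsy.ne']; ring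
  have e2 : 1 - y * (1 - s) / (1 - s * y) = (1 - y) / (1 - s * y) := by
    rw [eq_div_iff hsy.ne', sub_mul, div_mul_cancel₀ _ hsy.ne']; ring
  have l1 : log (s * (1 - y) / (1 - s * y)) = log s + log (1 - y) - log (1 - s * y) := by
    rw [log_div (by positivity) hsy.ne', log_mul hs0.ne' h1y.ne']
  have l2 : log (y * (1 - s) / (1 - s * y)) = log y + log (1 - s) - log (1 - s * y) := by
    rw [log_div (by positivity) hsy.ne', log_mul hy0.ne' h1s.ne']
  have l3 : log ((1 - s) / (1 - s * y)) = log (1 - s) - log (1 - s * y) :=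
    log_div h1s.ne' hsy.ne'
  have l4 : log ((1 - y) / (1 - s * y)) = log (1 - y) - log (1 - s * y) :=
    log_div h1y.ne' hsy.ne'
  simp only [rogersIntegrand, e1, e2, l1, l2, l3, l4, log_mul hs0.ne' hy0.ne']
  field_simp
  ring

theorem hasDerivAt_rogersL_pentagon {s y : ℝ} (hs0 : 0 < s) (hs1 : s < 1) (hy0 : 0 < y)
    (hy1 : y < 1) :
    HasDerivAt (fun s => rogersL (s * (1 - y) / (1 - s * y)) + rogersL (s * y)
      + rogersL (y * (1 - s) / (1 - s * y)) - rogersL s) 0 s := by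
  have hsy : 0 < 1 - s * y := by nlinarith
  have h1s : 0 < 1 - s := by linarith
  have h1y : 0 < 1 - y := by linarith
  have hden : HasDerivAt (fun s => 1 - s * y) (-y) s := (hasDerivAt_mul_const y).const_sub 1
  have hu : HasDerivAt (fun s => s * (1 - y) / (1 - s * y)) ((1 - y) / (1 - s * y) ^ 2) s :=
    ((hasDerivAt_mul_const (1 - y)).div hden hsy.ne').congr_deriv (by field_simp; ring)
  have hw : HasDerivAt (fun s => y * (1 - s) / (1 - s * y)) (-(y * (1 - y)) / (1 - s * y) ^ 2)
      s :=
    ((((hasDerivAt_id' s).const_sub 1).const_mul y).div hden hsy.ne').congr_deriv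
      (by field_simp; ring)
  have hu01 : s * (1 - y) / (1 - s * y) < 1 := by rw [div_lt_one hsy]; nlinarith
  have hw01 : y * (1 - s) / (1 - s * y) < 1 := by rw [div_lt_one hsy]; nlinarith
  have H := (((hasDerivAt_rogersL (by positivity) hu01).comp s hu).add
    ((hasDerivAt_rogersL (mul_pos hs0 hy0).ne' (by nlinarith)).comp s
      (hasDerivAt_mul_const y))).add
    ((hasDerivAt_rogersL (by positivity) hw01).comp s hw)
    |>.sub (hasDerivAt_rogersL hs0.ne' hs1)
  refine H.congr_deriv ?_
  linear_combination (-(1 / 2)) * rogersIntegrand_pentagon hs0 hs1 hy0 hy1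

theorem continuousAt_rogersL_pentagon {s y : ℝ} (hs0 : 0 ≤ s) (hs1 : s < 1) (hy1 : y < 1) :
    ContinuousAt (fun s => rogersL (s * (1 - y) / (1 - s * y)) + rogersL (s * y)
      + rogersL (y * (1 - s) / (1 - s * y)) - rogersL s) s := by
  have hsy : 0 < 1 - s * y := by nlinarith
  have hu : s * (1 - y) / (1 - s * y) < 1 := by rw [div_lt_one hsy]; nlinarith
  have hw : y * (1 - s) / (1 - s * y) < 1 := by rw [div_lt_one hsy]; nlinarith
  have hden : 1 - s * y ≠ 0 := hsy.ne'
  have := continuousAt_rogersL hu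
  have := continuousAt_rogersL (x := s * y) (by nlinarith)
  have := continuousAt_rogersL hw
  have := continuousAt_rogersL hs1
  fun_prop (disch := assumption)

/-- The five-term (pentagon) identity for the Rogers dilogarithm. -/
theorem rogersL_pentagon (x y : ℝ) (hx0 : 0 < x) (hx1 : x < 1) (hy0 : 0 < y) (hy1 : y < 1) :
    rogersL x + rogersL y =
      rogersL (x * (1 - y) / (1 - x * y)) + rogersL (x * y) +
        rogersL (y * (1 - x) / (1 - x * y)) := by
  set G : ℝ → ℝ := fun s => rogersL (s * (1 - y) / (1 - s * y)) + rogersL (s * y)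
    + rogersL (y * (1 - s) / (1 - s * y)) - rogersL s with hG
  obtain ⟨_, _, hslope⟩ := exists_hasDerivAt_eq_slope G (fun _ => 0) hx0
    (fun s hs => (continuousAt_rogersL_pentagon hs.1 (hs.2.trans_lt hx1) hy1).continuousWithinAt)
    (fun s hs => hasDerivAt_rogersL_pentagon hs.1 (hs.2.trans hx1) hy0 hy1)
  have hG0 : G 0 = rogersL y := by simp [hG, rogersL_zero]
  have hGx : G x = G 0 := by simpa [sub_eq_zero, hx0.ne'] using hslope.symm
  simp only [hG] at hGx hG0
  linarith
end

section
/- For any complex q with |q| < 1 and any complex x, and any positive integer k, the compact quantum dilogarithm satisfies the folding formula Ψ_q(x) = ∏_{j=1}^{k} Ψ_{q^k}(q^{k-2j+1} x). In particular, Ψ_q(x) = Ψ_{q²}(qx)·Ψ_{q²}(q⁻¹x). -/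
/-! Splitting `∏_m (1 + q^(2m+1) x)` according to `m mod k` turns each residue class into a
product of the same shape in `q^k`: for `m = nk + r` one has `q^(2m+1) = (q^k)^(2n+1) q^(2r+1-k)`.
Reversing the order of the residues gives the exponents `k - 2j - 1` of the folding formula. -/

/-- The q-Pochhammer symbol `(x; q)_∞ = ∏_{m=0}^∞ (1 - qᵐ x)`. -/
noncomputable def qPochInf (x q : ℂ) : ℂ := ∏' m : ℕ, (1 - q ^ m * x)

/-- The compact quantum dilogarithm `Ψ_q(x) = 1/(-qx; q²)_∞`. -/
noncomputable def Psi (q x : ℂ) : ℂ := (qPochInf (-q * x) (q ^ 2))⁻¹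

open Finset

theorem tprod_eq_prod_tprod_mul_add {α : Type*} [CommMonoid α] [TopologicalSpace α]
    [ContinuousMul α] [T3Space α] {f : ℕ → α} (hf : Multipliable f) (k : ℕ) [NeZero k]
    (hfiber : ∀ r : Fin k, Multipliable fun n ↦ f (n * k + r)) :
    ∏' m, f m = ∏ r : Fin k, ∏' n, f (n * k + r) := by
  obtain ⟨e, he⟩ : ∃ e : Fin k × ℕ ≃ ℕ, ∀ r n, e (r, n) = n * k + r :=
    ⟨(Equiv.prodComm (Fin k) ℕ).trans (Nat.divModEquiv k).symm, fun _ _ ↦ rfl⟩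
  have hfe : Multipliable fun p ↦ f (e p) := e.multipliable_iff.mpr hf
  rw [← e.tprod_eq, hfe.tprod_prod' (by simpa only [he] using hfiber), tprod_fintype]
  simp only [he]

theorem multipliable_one_sub_geometric (x : ℂ) {q : ℂ} (hq : ‖q‖ < 1) :
    Multipliable fun m ↦ 1 - q ^ m * x := by
  have hsum : Summable fun m ↦ q ^ m * x := (summable_geometric_of_norm_lt_one hq).mul_right x
  simpa only [sub_eq_add_neg] using Complex.multipliable_one_add_of_summable hsum.neg

theorem qPochInf_eq_prod_range (x : ℂ) {q : ℂ} (hq : ‖q‖ < 1) (k : ℕ) [NeZero k] :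
    qPochInf x q = ∏ r ∈ range k, qPochInf (q ^ r * x) (q ^ k) := by
  have hfiber (r n : ℕ) : q ^ (n * k + r) * x = (q ^ k) ^ n * (q ^ r * x) := by ring
  have hqk : ‖q ^ k‖ < 1 := by
    rw [norm_pow]; exact pow_lt_one₀ (norm_nonneg q) hq (NeZero.ne k)
  rw [qPochInf, tprod_eq_prod_tprod_mul_add (multipliable_one_sub_geometric x hq) k
      fun r ↦ by simpa only [hfiber] using multipliable_one_sub_geometric (q ^ (r : ℕ) * x) hqk,
    ← Fin.prod_univ_eq_prod_range (fun r ↦ qPochInf (q ^ r * x) (q ^ k))]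
  simp only [hfiber, qPochInf]

theorem Psi_eq_prod_range {q : ℂ} (x : ℂ)
    (hq0 : q ≠ 0) (hq : ‖q‖ < 1) (k : ℕ) [NeZero k] :
    Psi q x = ∏ r ∈ range k, Psi (q ^ k) (q ^ (2 * (r : ℤ) + 1 - k) * x) := by
  have hq2 : ‖q ^ 2‖ < 1 := by
    rw [norm_pow]; exact pow_lt_one₀ (norm_nonneg q) hq two_ne_zero
  rw [Psi, qPochInf_eq_prod_range _ hq2 k, ← prod_inv_distrib]
  refine prod_congr rfl fun r _ ↦ ?_
  have hexp : q ^ k * q ^ (2 * (r : ℤ) + 1 - k) = (q ^ 2) ^ r * q := by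
    rw [← zpow_natCast, ← zpow_add₀ hq0, ← pow_mul, ← pow_succ, ← zpow_natCast]
    push_cast
    ring_nf
  rw [Psi]
  congr 2
  · linear_combination x * hexp
  · ring

/-- The folding formula `Ψ_q(x) = ∏_{j=1}^{k} Ψ_{q^k}(q^{k-2j+1} x)` for the compact
quantum dilogarithm; in particular `Ψ_q(x) = Ψ_{q²}(qx)·Ψ_{q²}(q⁻¹x)`. -/
theorem Psi_folding (q x : ℂ) (hq0 : q ≠ 0) (hq : ‖q‖ < 1) (k : ℕ) (hk : 0 < k) :
    Psi q x = (∏ j ∈ Finset.range k, Psi (q ^ k) (q ^ ((k : ℤ) - 2 * ((j : ℤ) + 1) + 1) * x)) ∧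
      Psi q x = Psi (q ^ 2) (q * x) * Psi (q ^ 2) (q⁻¹ * x) := by
  have folding (k : ℕ) [NeZero k] :
      Psi q x = ∏ j ∈ range k, Psi (q ^ k) (q ^ ((k : ℤ) - 2 * ((j : ℤ) + 1) + 1) * x) := by
    rw [Psi_eq_prod_range x hq0 hq k, ← prod_range_reflect]
    refine prod_congr rfl fun j hj ↦ ?_
    have hcast : ((k - 1 - j : ℕ) : ℤ) = k - 1 - j := by
      have := mem_range.mp hj
      omega
    rw [hcast]
    ring_nf
  have : NeZero k := ⟨hk.ne'⟩
  refine ⟨folding k, ?_⟩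
  rw [folding 2]
  simp [prod_range_succ]
end

section
/- For the rank-2 exchange matrix of type B₂ with y-dynamics y₁ ↦ 1/y₁, y₂ ↦ y₂(1+y₁)² under μ₁ and y₂ ↦ 1/y₂, y₁ ↦ y₁(1+y₂⁻¹)⁻¹ under μ₂ (exponents governed by |b₁₂| = 2, |b₂₁| = 1), the composite μ₂μ₁μ₂μ₁μ₂μ₁ acts as the identity on the pair of rational functions (Y₁, Y₂). -/
set_option maxHeartbeats 2000000


/-- The field of rational functions `ℚ(Y₁, Y₂)`. -/
abbrev K2 : Type := FractionRing (MvPolynomial (Fin 2) ℚ)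

noncomputable def Ygen (i : Fin 2) : K2 :=
  algebraMap (MvPolynomial (Fin 2) ℚ) K2 (MvPolynomial.X i)

/-- B₂ mutation at vertex 1: `y₁ ↦ 1/y₁, y₂ ↦ y₂(1+y₁)²` (exponent `|b₁₂| = 2`). -/
noncomputable def muOne (p : K2 × K2) : K2 × K2 := (p.1⁻¹, p.2 * (1 + p.1) ^ 2)

/-- B₂ mutation at vertex 2: `y₂ ↦ 1/y₂, y₁ ↦ y₁(1+y₂)` (exponent `|b₂₁| = 1`). -/
noncomputable def muTwo (p : K2 × K2) : K2 × K2 := (p.1 * (1 + p.2), p.2⁻¹)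

private lemma algMap_ne_zero (p : MvPolynomial (Fin 2) ℚ)
    (h : MvPolynomial.eval (fun _ => (1 : ℚ)) p ≠ 0) :
    algebraMap (MvPolynomial (Fin 2) ℚ) K2 p ≠ 0 := by
  intro hp
  apply h
  have hp0 : p = 0 := by
    have := (IsFractionRing.injective (MvPolynomial (Fin 2) ℚ) K2)
    exact this (by simpa using hp)
  simp [hp0]

private lemma expr_ne_zero (p : MvPolynomial (Fin 2) ℚ)
    (e : K2) (he : e = algebraMap (MvPolynomial (Fin 2) ℚ) K2 p)
    (h : MvPolynomial.eval (fun _ => (1 : ℚ)) p ≠ 0) : e ≠ 0 := by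
  rw [he]; exact algMap_ne_zero p h

/-- For the rank-2 exchange matrix of type B₂, the composite `μ₂μ₁μ₂μ₁μ₂μ₁` acts as the
identity on the pair of rational functions `(Y₁, Y₂)`: the B₂ y-seed loop has length 6. -/
theorem B2_y_period_six :
    muTwo (muOne (muTwo (muOne (muTwo (muOne (Ygen 0, Ygen 1)))))) = (Ygen 0, Ygen 1) := by
  set x : K2 := Ygen 0 with hx
  set y : K2 := Ygen 1 with hy
  have hx0 : x ≠ 0 := expr_ne_zero (MvPolynomial.X 0) x rfl (by simp)
  have hy0 : y ≠ 0 := expr_ne_zero (MvPolynomial.X 1) y rfl (by simp)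
  have h1x : (1 + x) ≠ 0 := expr_ne_zero (1 + MvPolynomial.X 0) _
    (by simp [hx, Ygen, map_add, map_one]) (by norm_num)
  have h1y : (1 + y) ≠ 0 := expr_ne_zero (1 + MvPolynomial.X 1) _
    (by simp [hy, Ygen, map_add, map_one]) (by norm_num)
  have hA : (1 + y * (1 + x) ^ 2) ≠ 0 :=
    expr_ne_zero (1 + MvPolynomial.X 1 * (1 + MvPolynomial.X 0) ^ 2) _
    (by simp [hx, hy, Ygen, map_add, map_one, map_mul, map_pow]) (by norm_num)
  have hC : (1 + y * (1 + x)) ≠ 0 :=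
    expr_ne_zero (1 + MvPolynomial.X 1 * (1 + MvPolynomial.X 0)) _
    (by simp [hx, hy, Ygen, map_add, map_one, map_mul]) (by norm_num)
  have hB : (1 + x + y * (1 + x) ^ 2) ≠ 0 :=
    expr_ne_zero (1 + MvPolynomial.X 0 + MvPolynomial.X 1 * (1 + MvPolynomial.X 0) ^ 2) _
    (by simp [hx, hy, Ygen, map_add, map_one, map_mul, map_pow]) (by norm_num)
  have hD : (y * x ^ 2 + (1 + y * (1 + x)) ^ 2) ≠ 0 :=
    expr_ne_zero (MvPolynomial.X 1 * MvPolynomial.X 0 ^ 2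
      + (1 + MvPolynomial.X 1 * (1 + MvPolynomial.X 0)) ^ 2) _
    (by simp [hx, hy, Ygen, map_add, map_one, map_mul, map_pow]) (by norm_num)
  have e2 : muTwo (x⁻¹, y * (1 + x) ^ 2) =
      ((1 + y * (1 + x) ^ 2) / x, (y * (1 + x) ^ 2)⁻¹) := by
    simp only [muTwo, Prod.mk.injEq]
    refine ⟨?_, trivial⟩
    field_simp
  have e3 : muOne ((1 + y * (1 + x) ^ 2) / x, (y * (1 + x) ^ 2)⁻¹) =
      (x / (1 + y * (1 + x) ^ 2), (1 + y * (1 + x)) ^ 2 / (y * x ^ 2)) := by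
    simp only [muOne, Prod.mk.injEq]
    constructor
    · rw [inv_div]
    · field_simp
      ring
  have e4 : muTwo (x / (1 + y * (1 + x) ^ 2), (1 + y * (1 + x)) ^ 2 / (y * x ^ 2)) =
      ((y * x ^ 2 + (1 + y * (1 + x)) ^ 2) / ((1 + y * (1 + x) ^ 2) * y * x),
        y * x ^ 2 / (1 + y * (1 + x)) ^ 2) := by
    simp only [muTwo, Prod.mk.injEq]
    constructor
    · field_simp
    · rw [inv_div]
  have e5 : muOne ((y * x ^ 2 + (1 + y * (1 + x)) ^ 2) / ((1 + y * (1 + x) ^ 2) * y * x),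
        y * x ^ 2 / (1 + y * (1 + x)) ^ 2) =
      ((1 + y * (1 + x) ^ 2) * y * x / (y * x ^ 2 + (1 + y * (1 + x)) ^ 2), y⁻¹) := by
    simp only [muOne, Prod.mk.injEq]
    constructor
    · rw [inv_div]
    · field_simp
      ring
  have e6 : muTwo ((1 + y * (1 + x) ^ 2) * y * x / (y * x ^ 2 + (1 + y * (1 + x)) ^ 2), y⁻¹) =
      (x, y) := by
    simp only [muTwo, Prod.mk.injEq]
    constructor
    · field_simp
      ring
    · rw [inv_inv]
  show muTwo (muOne (muTwo (muOne (muTwo (muOne (x, y)))))) = (x, y)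
  have e1 : muOne (x, y) = (x⁻¹, y * (1 + x) ^ 2) := rfl
  rw [e1, e2, e3, e4, e5, e6]
end
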